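/- Let v₁, v₂, v₃, v₄ ∈ ℤ³ each have coordinate sum equal to 1, and suppose det(v₁, v₂, v₃) = 1, det(v₁, v₃, v₄) = 1, |det(v₁, v₂, v₄)| = 1, and |det(v₂, v₃, v₄)| = 1, where det(u, v, w) denotes the determinant of the 3×3 integer matrix with rows u, v, w. Then v₁ + v₃ = v₂ + v₄. -/
import Mathlib


/-- Converse of the flip criterion: if v₁, v₂, v₃, v₄ ∈ ℤ³ each have coordinate
sum 1, det(v₁, v₂, v₃) = 1, det(v₁, v₃, v₄) = 1, and the flipped triangles
{v₁, v₂, v₄} and {v₂, v₃, v₄} are unimodular, then v₁ + v₃ = v₂ + v₄. -/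
theorem flip_criterion_converse (v₁ v₂ v₃ v₄ : Fin 3 → ℤ)
    (h₁ : ∑ i, v₁ i = 1) (h₂ : ∑ i, v₂ i = 1)
    (h₃ : ∑ i, v₃ i = 1) (h₄ : ∑ i, v₄ i = 1)
    (h123 : (Matrix.of ![v₁, v₂, v₃]).det = 1)
    (h134 : (Matrix.of ![v₁, v₃, v₄]).det = 1)
    (h124 : |(Matrix.of ![v₁, v₂, v₄]).det| = 1)
    (h234 : |(Matrix.of ![v₂, v₃, v₄]).det| = 1) :
    v₁ + v₃ = v₂ + v₄ := by
  simp only [Matrix.det_fin_three, Matrix.of_apply, Matrix.cons_val', Matrix.cons_val_zero,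
    Matrix.cons_val_one, Matrix.head_cons, Matrix.cons_val_two, Matrix.tail_cons,
    Matrix.empty_val', Matrix.cons_val_fin_one, Matrix.vecHead] at h123 h134 h124 h234
  simp only [Fin.sum_univ_three] at h₁ h₂ h₃ h₄
  set a : ℤ := v₂ 0 * v₃ 1 * v₄ 2 - v₂ 0 * v₃ 2 * v₄ 1 - v₂ 1 * v₃ 0 * v₄ 2
      + v₂ 1 * v₃ 2 * v₄ 0 + v₂ 2 * v₃ 0 * v₄ 1 - v₂ 2 * v₃ 1 * v₄ 0 with ha
  set c : ℤ := v₁ 0 * v₂ 1 * v₄ 2 - v₁ 0 * v₂ 2 * v₄ 1 - v₁ 1 * v₂ 0 * v₄ 2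
      + v₁ 1 * v₂ 2 * v₄ 0 + v₁ 2 * v₂ 0 * v₄ 1 - v₁ 2 * v₂ 1 * v₄ 0 with hc
  -- Cramer's rule: v₄ = a • v₁ - (det v₁v₃v₄) • v₂ + c • v₃, coordinatewise
  have cram : ∀ i, v₄ i = a * v₁ i - 1 * v₂ i + c * v₃ i := by
    intro i
    fin_cases i
    · simp only [Fin.zero_eta, ha, hc]
      linear_combination (-(v₄ 0)) * h123 - v₂ 0 * h134
    · simp only [Fin.mk_one, ha, hc]
      linear_combination (-(v₄ 1)) * h123 - v₂ 1 * h134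
    · simp only [Fin.reduceFinMk, ha, hc]
      linear_combination (-(v₄ 2)) * h123 - v₂ 2 * h134
  have habc : a + c = 2 := by
    linear_combination (-(1:ℤ)) * (cram 0) - (cram 1) - (cram 2) + h₄ - a * h₁ + h₂ - c * h₃
  have hac : a = 1 ∧ c = 1 := by
    rcases (abs_eq (by norm_num : (0:ℤ) ≤ 1)).mp h234 with h | h <;>
    rcases (abs_eq (by norm_num : (0:ℤ) ≤ 1)).mp h124 with h' | h' <;>
      exact ⟨by linarith, by linarith⟩
  funext i
  have hi := cram i
  simp only [Pi.add_apply]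
  rw [hac.1, hac.2] at hi
  linarith
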